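/- arXiv:2605.07974 — 6 statements merged into one kernel-verified Lean document; each statement's English description precedes it below -/
import Mathlib

section
/- With the notation of the setting (f_j = sum_{i=0}^3 a_{ij} p_i built from the minimal syzygy S of bidegree (0,n)), one has f_0 ≠ 0 and f_n ≠ 0. -/
open MvPolynomial

/-- The bigrading weights on `K[s,t,u,v]`: `s,t` have bidegree `(1,0)` and
`u,v` have bidegree `(0,1)`. Variables: `X 0 = s`, `X 1 = t`, `X 2 = u`, `X 3 = v`. -/
def bw : Fin 4 → ℕ × ℕ := ![(1, 0), (1, 0), (0, 1), (0, 1)]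

lemma hXpow {K : Type*} [CommSemiring K] (i : Fin 4) (k : ℕ) :
    IsWeightedHomogeneous bw (X i ^ k : MvPolynomial (Fin 4) K) (k • bw i) := by
  induction k with
  | zero => simpa using isWeightedHomogeneous_one K bw
  | succ m ih =>
      rw [pow_succ, succ_nsmul]
      exact ih.mul (isWeightedHomogeneous_X _ _ _)

lemma term_hom {K : Type*} [CommSemiring K] (c : K) (e2 e3 : ℕ) :
    IsWeightedHomogeneous bw (C c * X 2 ^ e2 * X 3 ^ e3 : MvPolynomial (Fin 4) K)
      (0, e2 + e3) := by
  have h := ((isWeightedHomogeneous_C bw c).mul (hXpow 2 e2)).mul (hXpow 3 e3)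
  convert h using 1
  simp [bw, Prod.ext_iff, smul_eq_mul]

/-- If `S = (g₀,g₁,g₂,g₃)` is a minimal syzygy of `I_U` of bidegree `(0,n)`, with
`gᵢ = ∑ⱼ aᵢⱼ u^{n-j} v^j`, and `f_j = ∑ᵢ aᵢⱼ pᵢ`, then `f 0 ≠ 0` and `f n ≠ 0`. -/
theorem f_zero_and_f_n_nonzero
    (K : Type*) [Field K] [IsAlgClosed K]
    (a b n : ℕ) (ha : 1 ≤ a) (hb : 1 ≤ b)
    (p : Fin 4 → MvPolynomial (Fin 4) K)
    (hp : ∀ i, (p i).IsWeightedHomogeneous bw (a, b))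
    (hpli : LinearIndependent K p)
    (hbpf : ¬ ∃ x : Fin 4 → K, ¬(x 0 = 0 ∧ x 1 = 0) ∧ ¬(x 2 = 0 ∧ x 3 = 0) ∧
      ∀ i, eval x (p i) = 0)
    (g : Fin 4 → MvPolynomial (Fin 4) K)
    (hg : ∀ i, (g i).IsWeightedHomogeneous bw (0, n))
    (hgne : g ≠ 0)
    (hgsyz : ∑ i, g i * p i = 0)
    (hmin : ∀ m < n, ∀ h : Fin 4 → MvPolynomial (Fin 4) K,
      (∀ i, (h i).IsWeightedHomogeneous bw (0, m)) → ∑ i, h i * p i = 0 → h = 0)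
    (A : Fin 4 → Fin (n + 1) → K)
    (hgA : ∀ i, g i = ∑ j : Fin (n + 1), C (A i j) * X 2 ^ (n - (j : ℕ)) * X 3 ^ (j : ℕ))
    (f : Fin (n + 1) → MvPolynomial (Fin 4) K)
    (hf : ∀ j, f j = ∑ i, C (A i j) * p i) :
    f 0 ≠ 0 ∧ f (Fin.last n) ≠ 0 := by
  -- a column of A vanishing identically kills that f_j and conversely
  have colzero : ∀ j : Fin (n + 1), f j = 0 → ∀ i, A i j = 0 := by
    intro j hfj i
    rw [hf j] at hfj
    exact Fintype.linearIndependent_iff.mp hpli (fun i => A i j)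
      (by simpa [smul_eq_C_mul] using hfj) i
  constructor
  · intro hf0
    have hA0 : ∀ i, A i 0 = 0 := colzero 0 hf0
    rcases Nat.eq_zero_or_pos n with hn | hn
    · subst hn
      apply hgne
      funext i
      rw [hgA i]
      have : ∀ j : Fin 1, A i j = 0 := by
        intro j; rw [Fin.eq_zero j]; exact hA0 i
      simp [this]
    · set h : Fin 4 → MvPolynomial (Fin 4) K :=
        fun i => ∑ j : Fin (n + 1), C (A i j) * X 2 ^ (n - (j : ℕ)) * X 3 ^ ((j : ℕ) - 1)
        with hh
      have hgh : ∀ i, g i = X 3 * h i := by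
        intro i
        rw [hgA i, hh, Finset.mul_sum]
        refine Finset.sum_congr rfl fun j _ => ?_
        by_cases hj : (j : ℕ) = 0
        · have : j = 0 := Fin.ext (by simpa using hj)
          subst this
          simp [hA0 i]
        · obtain ⟨e, he⟩ : ∃ e, (j : ℕ) = e + 1 := ⟨(j : ℕ) - 1, by omega⟩
          rw [he, Nat.add_sub_cancel, pow_succ]
          ring
      have hhom : ∀ i, IsWeightedHomogeneous bw (h i) (0, n - 1) := by
        intro i
        rw [hh]
        refine IsWeightedHomogeneous.sum _ _ _ fun j _ => ?_
        by_cases hj : (j : ℕ) = 0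
        · have : j = 0 := Fin.ext (by simpa using hj)
          subst this
          simpa [hA0 i] using isWeightedHomogeneous_zero K bw ((0 : ℕ), n - 1)
        · have hjn : (j : ℕ) ≤ n := Nat.lt_succ_iff.mp j.isLt
          have : (0, n - 1) = ((0 : ℕ), (n - (j : ℕ)) + ((j : ℕ) - 1)) := by
            have := Nat.pos_of_ne_zero hj
            refine Prod.ext rfl ?_
            omega
          rw [this]
          exact term_hom _ _ _
      have hsyz : ∑ i, h i * p i = 0 := by
        have : X 3 * ∑ i, h i * p i = 0 := by
          rw [Finset.mul_sum, ← hgsyz]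
          exact Finset.sum_congr rfl fun i _ => by rw [hgh i]; ring
        rcases mul_eq_zero.mp this with h' | h'
        · exact absurd h' (X_ne_zero 3)
        · exact h'
      have hzero := hmin (n - 1) (by omega) h hhom hsyz
      apply hgne
      funext i
      rw [hgh i, hzero]
      simp
  · intro hfn
    have hAn : ∀ i, A i (Fin.last n) = 0 := colzero (Fin.last n) hfn
    rcases Nat.eq_zero_or_pos n with hn | hn
    · subst hn
      apply hgne
      funext i
      rw [hgA i]
      have : ∀ j : Fin 1, A i j = 0 := by
        intro j; rw [Fin.eq_zero j]; exact hAn i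
      simp [this]
    · set h : Fin 4 → MvPolynomial (Fin 4) K :=
        fun i => ∑ j : Fin (n + 1), C (A i j) * X 2 ^ (n - (j : ℕ) - 1) * X 3 ^ (j : ℕ)
        with hh
      have hgh : ∀ i, g i = X 2 * h i := by
        intro i
        rw [hgA i, hh, Finset.mul_sum]
        refine Finset.sum_congr rfl fun j _ => ?_
        by_cases hj : (j : ℕ) = n
        · have : j = Fin.last n := Fin.ext (by simpa using hj)
          subst this
          simp [hAn i]
        · have hjn : (j : ℕ) < n := lt_of_le_of_ne (Nat.lt_succ_iff.mp j.isLt) hj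
          obtain ⟨e, he⟩ : ∃ e, n - (j : ℕ) = e + 1 := ⟨n - (j : ℕ) - 1, by omega⟩
          rw [he, Nat.add_sub_cancel, pow_succ]
          ring
      have hhom : ∀ i, IsWeightedHomogeneous bw (h i) (0, n - 1) := by
        intro i
        rw [hh]
        refine IsWeightedHomogeneous.sum _ _ _ fun j _ => ?_
        by_cases hj : (j : ℕ) = n
        · have : j = Fin.last n := Fin.ext (by simpa using hj)
          subst this
          simpa [hAn i] using isWeightedHomogeneous_zero K bw ((0 : ℕ), n - 1)
        · have hjn : (j : ℕ) < n := lt_of_le_of_ne (Nat.lt_succ_iff.mp j.isLt) hj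
          have : (0, n - 1) = ((0 : ℕ), (n - (j : ℕ) - 1) + (j : ℕ)) := by
            refine Prod.ext rfl ?_
            omega
          rw [this]
          exact term_hom _ _ _
      have hsyz : ∑ i, h i * p i = 0 := by
        have : X 2 * ∑ i, h i * p i = 0 := by
          rw [Finset.mul_sum, ← hgsyz]
          exact Finset.sum_congr rfl fun i _ => by rw [hgh i]; ring
        rcases mul_eq_zero.mp this with h' | h'
        · exact absurd h' (X_ne_zero 2)
        · exact h'
      have hzero := hmin (n - 1) (by omega) h hhom hsyz
      apply hgne
      funext i
      rw [hgh i, hzero]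
      simp
end

section
/- The K-vector space V = span_K{f_0,...,f_n} satisfies 2 <= dim_K V <= 4. -/
open MvPolynomial

/-- Linear independence of the monomials `u^{n-j} v^j`, `j = 0,…,n`. -/
lemma mono_indep {K : Type*} [Field K] {n : ℕ} (c : Fin (n + 1) → K)
    (h : ∑ j : Fin (n + 1), C (c j) * (X 2 : MvPolynomial (Fin 4) K) ^ (n - (j : ℕ))
        * X 3 ^ (j : ℕ) = 0) : ∀ j, c j = 0 := by
  intro j₀
  have hterm : ∀ j : Fin (n + 1),
      C (c j) * (X 2 : MvPolynomial (Fin 4) K) ^ (n - (j : ℕ)) * X 3 ^ (j : ℕ)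
        = monomial (Finsupp.single 2 (n - (j : ℕ)) + Finsupp.single 3 (j : ℕ)) (c j) := by
    intro j
    rw [X_pow_eq_monomial, X_pow_eq_monomial, C_apply, monomial_mul, monomial_mul]
    simp [add_assoc]
  have := congrArg
    (coeff (Finsupp.single 2 (n - (j₀ : ℕ)) + Finsupp.single 3 (j₀ : ℕ))) h
  rw [coeff_sum] at this
  simp only [hterm, coeff_monomial, coeff_zero] at this
  rw [Finset.sum_eq_single j₀] at this
  · simpa using this
  · intro j _ hj
    rw [if_neg]
    intro heq
    apply hj
    have h3 := congrFun (congrArg (fun m : Fin 4 →₀ ℕ => (m : Fin 4 → ℕ)) heq) 3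
    simp [Finsupp.single_apply] at h3
    exact Fin.ext h3
  · intro hj; exact absurd (Finset.mem_univ j₀) hj

/-- The vector space `V = span_K {f_0, …, f_n}` satisfies `2 ≤ dim_K V ≤ 4`. -/
theorem dim_V_between_two_and_four
    (K : Type*) [Field K] [IsAlgClosed K]
    (a b n : ℕ) (ha : 1 ≤ a) (hb : 1 ≤ b)
    (p : Fin 4 → MvPolynomial (Fin 4) K)
    (hp : ∀ i, (p i).IsWeightedHomogeneous bw (a, b))
    (hpli : LinearIndependent K p)
    (hbpf : ¬ ∃ x : Fin 4 → K, ¬(x 0 = 0 ∧ x 1 = 0) ∧ ¬(x 2 = 0 ∧ x 3 = 0) ∧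
      ∀ i, eval x (p i) = 0)
    (g : Fin 4 → MvPolynomial (Fin 4) K)
    (hg : ∀ i, (g i).IsWeightedHomogeneous bw (0, n))
    (hgne : g ≠ 0)
    (hgsyz : ∑ i, g i * p i = 0)
    (hmin : ∀ m < n, ∀ h : Fin 4 → MvPolynomial (Fin 4) K,
      (∀ i, (h i).IsWeightedHomogeneous bw (0, m)) → ∑ i, h i * p i = 0 → h = 0)
    (A : Fin 4 → Fin (n + 1) → K)
    (hgA : ∀ i, g i = ∑ j : Fin (n + 1), C (A i j) * X 2 ^ (n - (j : ℕ)) * X 3 ^ (j : ℕ))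
    (f : Fin (n + 1) → MvPolynomial (Fin 4) K)
    (hf : ∀ j, f j = ∑ i, C (A i j) * p i) :
    2 ≤ Module.finrank K ↥(Submodule.span K (Set.range f)) ∧
      Module.finrank K ↥(Submodule.span K (Set.range f)) ≤ 4 := by
  classical
  have hPfin : FiniteDimensional K (Submodule.span K (Set.range p)) :=
    FiniteDimensional.span_of_finite K (Set.finite_range p)
  have hVfin : FiniteDimensional K (Submodule.span K (Set.range f)) :=
    FiniteDimensional.span_of_finite K (Set.finite_range f)
  have hle : Submodule.span K (Set.range f) ≤ Submodule.span K (Set.range p) := by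
    rw [Submodule.span_le]
    rintro _ ⟨j, rfl⟩
    rw [hf j]
    exact Submodule.sum_mem _ fun i _ => by
      rw [← smul_eq_C_mul]
      exact Submodule.smul_mem _ _ (Submodule.subset_span ⟨i, rfl⟩)
  refine ⟨?_, ?_⟩
  · -- lower bound
    by_contra hlt
    push_neg at hlt
    have hrank1 : Module.rank K (Submodule.span K (Set.range f)) ≤ 1 := by
      rw [← Module.finrank_eq_rank]
      exact_mod_cast Nat.lt_succ_iff.mp hlt
    obtain ⟨w, hwmem, hwspan⟩ :=
      (rank_submodule_le_one_iff (Submodule.span K (Set.range f))).mp hrank1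
    obtain ⟨d, hd⟩ := (Submodule.mem_span_range_iff_exists_fun K).mp (hle hwmem)
    have hc : ∀ j, ∃ c : K, c • w = f j := fun j =>
      Submodule.mem_span_singleton.mp (hwspan (Submodule.subset_span ⟨j, rfl⟩))
    choose c hcw using hc
    -- A i j = c j * d i
    have hA : ∀ i j, A i j = c j * d i := by
      intro i j
      have h1 : ∑ i, (A i j - c j * d i) • p i = 0 := by
        have : f j = ∑ i, (c j * d i) • p i := by
          rw [← hcw j, ← hd, Finset.smul_sum]
          simp [smul_smul]
        rw [hf j] at this
        simp only [sub_smul, Finset.sum_sub_distrib, smul_eq_C_mul]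
        simp only [smul_eq_C_mul] at this
        rw [this, sub_self]
      have := Fintype.linearIndependent_iff.mp hpli _ h1 i
      exact sub_eq_zero.mp this
    set h : MvPolynomial (Fin 4) K :=
      ∑ j : Fin (n + 1), C (c j) * X 2 ^ (n - (j : ℕ)) * X 3 ^ (j : ℕ) with hh
    have hgi : ∀ i, g i = C (d i) * h := by
      intro i
      rw [hgA i, hh, Finset.mul_sum]
      refine Finset.sum_congr rfl fun j _ => ?_
      rw [hA i j, map_mul]
      ring
    have hzero : h * ∑ i, C (d i) * p i = 0 := by
      rw [← hgsyz]
      rw [Finset.mul_sum]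
      refine Finset.sum_congr rfl fun i _ => ?_
      rw [hgi i]; ring
    have hA0 : ∀ i j, A i j = 0 := by
      rcases mul_eq_zero.mp hzero with h0 | h0
      · have := mono_indep c h0
        intro i j; rw [hA i j, this j, zero_mul]
      · have hd0 : ∀ i, d i = 0 := by
          have : ∑ i, d i • p i = 0 := by
            rw [← h0]; simp [smul_eq_C_mul]
          exact Fintype.linearIndependent_iff.mp hpli _ this
        intro i j; rw [hA i j, hd0 i, mul_zero]
    apply hgne
    funext i
    rw [hgA i]
    simp [hA0]
  · -- upper bound
    calc Module.finrank K (Submodule.span K (Set.range f))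
        ≤ Module.finrank K (Submodule.span K (Set.range p)) := Submodule.finrank_mono hle
      _ ≤ Fintype.card (Fin 4) := finrank_range_le_card p
      _ = 4 := by simp
end

section
/- Assume dim_K V = 2. Let f0', f1' be elements of {f_0,...,f_n} forming a K-basis of V, let B be the (unique) 2 x (n+1) matrix over K with f_j = B_{0j} f0' + B_{1j} f1' for all 0 <= j <= n, and set (h0, h1)^T = B · (u^n, u^{n-1}v, ..., v^n)^T in K[u,v]^2. Then h0, h1 is an R-regular sequence. -/
open MvPolynomial

/-!
Linear independence of the `p i` forces the coefficient matrix of the syzygy to factor through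
the chosen basis of `V`, so every entry `g i` is a `K`-linear combination of `h 0` and `h 1`.
If `h 0, h 1` had a common zero `(u₀, v₀) ≠ 0`, so would all the binary forms `g i`; they would
then share the linear factor `v₀ u - u₀ v`, and dividing it out would give a nonzero syzygy of
degree `n - 1`. Hence `u` and `v` lie in the radical of `(h 0, h 1)` by the Nullstellensatz, so
`h 0` and `h 1` are coprime; two coprime elements of a factorial domain that generate a proper
ideal form a regular sequence.
-/

open Finset

open scoped Pointwise in
theorem isRegular_pair_of_isRelPrime {R : Type*} [CommRing R] [IsDomain R]
    [DecompositionMonoid R] {a b : R} (hab : IsRelPrime a b) (hne : Ideal.span {a, b} ≠ ⊤) :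
    RingTheory.Sequence.IsRegular R [a, b] := by
  have ha : a ≠ 0 := by
    rintro rfl
    exact hne (Ideal.eq_top_of_isUnit_mem _ (Ideal.subset_span (by simp))
      (isRelPrime_zero_left.mp hab))
  have hmem : ∀ x : R, x ∈ a • (⊤ : Submodule R R) ↔ a ∣ x := fun x => by
    rw [← Submodule.ideal_span_singleton_smul, smul_eq_mul, Ideal.mul_top,
      Ideal.mem_span_singleton]
  refine ⟨?_, ?_⟩
  · simp only [RingTheory.Sequence.isWeaklyRegular_cons_iff]
    refine ⟨IsSMulRegular.of_ne_zero ha, ?_, .nil _ _⟩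
    refine (isSMulRegular_quotient_iff_mem_of_smul_mem _ _).mpr fun x hx => ?_
    rw [hmem, smul_eq_mul] at *
    exact hab.dvd_of_dvd_mul_left hx
  · rw [Ideal.ofList_cons, Ideal.ofList_singleton, ← Ideal.span_insert, smul_eq_mul,
      Ideal.mul_top]
    exact hne.symm

theorem isRelPrime_of_mem_radical {R : Type*} [CommRing R] [DecompositionMonoid R]
    {a b x y : R} (hxy : IsRelPrime x y) (hx : x ∈ (Ideal.span {a, b}).radical)
    (hy : y ∈ (Ideal.span {a, b}).radical) : IsRelPrime a b := by
  intro d hda hdb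
  have hdvd : ∀ z ∈ Ideal.span {a, b}, d ∣ z := fun z hz => by
    rw [← Ideal.mem_span_singleton]
    exact Ideal.span_le.mpr (by simp [Set.insert_subset_iff, Ideal.mem_span_singleton, hda, hdb]) hz
  obtain ⟨N, hN⟩ := hx
  obtain ⟨M, hM⟩ := hy
  exact hxy.pow (hdvd _ hN) (hdvd _ hM)

theorem isRelPrime_X_X {σ R : Type*} [CommRing R] [IsDomain R] {i j : σ} (hij : i ≠ j) :
    IsRelPrime (X i : MvPolynomial σ R) (X j) :=
  X_prime.irreducible.isRelPrime_iff_not_dvd.mpr (by simpa using hij)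

theorem X_mem_radical_of_eval_eq_zero {σ K : Type*} [Finite σ] [Field K] [IsAlgClosed K]
    {I : Ideal (MvPolynomial σ K)} {i : σ} (h : ∀ z : σ → K, (∀ p ∈ I, eval z p = 0) → z i = 0) :
    X i ∈ I.radical := by
  rw [← vanishingIdeal_zeroLocus_eq_radical (K := K), mem_vanishingIdeal_iff]
  intro z hz
  simpa using h z hz

theorem eval_zero_sum_C_mul_X_pow_mul_X_pow {σ K : Type*} [CommRing K] {n : ℕ} (hn : n ≠ 0)
    (c : Fin (n + 1) → K) (x y : σ) :
    eval 0 (∑ j : Fin (n + 1), C (c j) * X x ^ (n - (j : ℕ)) * X y ^ (j : ℕ)) = 0 := by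
  simp only [map_sum, eval_mul, eval_C, eval_pow, eval_X, Pi.zero_apply, mul_assoc, ← pow_add]
  exact sum_eq_zero fun j _ => by rw [Nat.sub_add_cancel j.is_le, zero_pow hn, mul_zero]

theorem sum_C_mul_eq_sum_C_mul_sum {σ κ τ K : Type*} [Fintype κ] [Fintype τ] [CommRing K]
    {a : κ → K} {c : τ → K} {B : τ → κ → K} (hA : ∀ j, a j = ∑ k, c k * B k j)
    (e : κ → MvPolynomial σ K) :
    ∑ j, C (a j) * e j = ∑ k, C (c k) * ∑ j, C (B k j) * e j := by
  simp only [hA, map_sum, map_mul, sum_mul, mul_sum, mul_assoc]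
  exact sum_comm

theorem eq_sum_mul_of_linearIndependent {ι κ τ K V : Type*} [Fintype ι] [Fintype τ]
    [CommRing K] [AddCommGroup V] [Module K V] {p : ι → V} (hp : LinearIndependent K p)
    {A : ι → κ → K} {f : κ → V} (hf : ∀ j, f j = ∑ i, A i j • p i) {B : τ → κ → K}
    {σ : τ → κ} (hB : ∀ j, f j = ∑ k, B k j • f (σ k)) (i : ι) (j : κ) :
    A i j = ∑ k, A i (σ k) * B k j := by
  refine sub_eq_zero.mp
    (Fintype.linearIndependent_iff.mp hp (fun i => A i j - ∑ k, A i (σ k) * B k j) ?_ i)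
  simp only [sub_smul, sum_sub_distrib, ← hf, sum_smul, mul_comm (A _ _), mul_smul]
  rw [sum_comm, hB j]
  simp [hf, smul_sum]

theorem ne_zero_of_linearIndependent_of_syzygy {σ ι K : Type*} [Fintype ι] [Field K]
    {p g : ι → MvPolynomial σ K} (hp : LinearIndependent K p) (hg : ∑ i, g i * p i = 0)
    (hgne : g ≠ 0) {n : ℕ} (A : ι → Fin (n + 1) → K) (x y : σ)
    (hgA : ∀ i, g i = ∑ j : Fin (n + 1), C (A i j) * X x ^ (n - (j : ℕ)) * X y ^ (j : ℕ)) :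
    n ≠ 0 := by
  rintro rfl
  have hA0 := Fintype.linearIndependent_iff.mp hp (fun i => A i 0)
    (by simpa [smul_eq_C_mul, hgA] using hg)
  exact hgne (funext fun i => by simp [hgA, hA0])

section BinaryForms

variable {σ K M : Type*} [Field K] [AddCommMonoid M] {w : σ → M} {d : M} {x y : σ}

theorem isWeightedHomogeneous_C_mul_X_pow_mul_X_pow (hx : w x = d) (hy : w y = d) (c : K)
    (k m : ℕ) :
    IsWeightedHomogeneous w (C c * X x ^ k * X y ^ m : MvPolynomial σ K) ((k + m) • d) := by
  convert ((isWeightedHomogeneous_C w c).mul ((isWeightedHomogeneous_X K w x).pow k)).mul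
    ((isWeightedHomogeneous_X K w y).pow m) using 1
  rw [hx, hy, zero_add, add_smul]

omit [AddCommMonoid M] in
theorem C_mul_X_sub_C_mul_X_ne_zero (hxy : x ≠ y) (α : K) {β : K} (hβ : β ≠ 0) :
    (C β * X x - C α * X y : MvPolynomial σ K) ≠ 0 := by
  classical
  intro h
  exact hβ (by simpa [Pi.single_eq_of_ne' hxy] using congrArg (eval (Pi.single x 1)) h)

omit [AddCommMonoid M] in
theorem C_mul_X_pow_mul_X_pow_sub_eq_mul (c α β : K) (k m : ℕ) :
    (C (β ^ (k + m) * c) * X x ^ k * X y ^ m - C (c * α ^ k * β ^ m) * X y ^ (k + m) :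
      MvPolynomial σ K) =
    (C β * X x - C α * X y) * ∑ i ∈ range k,
      C (c * α ^ (k - 1 - i) * β ^ (m + i)) * X x ^ i * X y ^ (m + (k - 1 - i)) := by
  have hgeom := geom_sum₂_mul (C β * X x) (C α * X y : MvPolynomial σ K) k
  have hsum : ∑ i ∈ range k,
      C (c * α ^ (k - 1 - i) * β ^ (m + i)) * X x ^ i * X y ^ (m + (k - 1 - i)) =
      C (c * β ^ m) * X y ^ m * ∑ i ∈ range k, (C β * X x) ^ i * (C α * X y) ^ (k - 1 - i) := by
    rw [mul_sum]
    refine sum_congr rfl fun i _ => ?_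
    simp only [map_mul, map_pow]
    ring
  rw [hsum]
  simp only [map_mul, map_pow]
  linear_combination (C c * C β ^ m * X y ^ m : MvPolynomial σ K) * hgeom.symm

theorem exists_eq_mul_of_eval_eq_zero {ι : Type*} (s : Finset ι) (c : ι → K) (k m : ι → ℕ)
    {N : ℕ} (hkm : ∀ j ∈ s, k j + m j = N + 1) (hx : w x = d) (hy : w y = d) {z : σ → K}
    (hzy : z y ≠ 0) (hz : eval z (∑ j ∈ s, C (c j) * X x ^ k j * X y ^ m j) = 0) :
    ∃ q : MvPolynomial σ K, IsWeightedHomogeneous w q (N • d) ∧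
      ∑ j ∈ s, C (c j) * X x ^ k j * X y ^ m j = (C (z y) * X x - C (z x) * X y) * q := by
  set Q := ∑ j ∈ s, ∑ i ∈ range (k j), C (c j * z x ^ (k j - 1 - i) * z y ^ (m j + i)) *
    X x ^ i * X y ^ (m j + (k j - 1 - i))
  have hQ : IsWeightedHomogeneous w Q (N • d) := by
    refine IsWeightedHomogeneous.sum _ _ _ fun j hj => IsWeightedHomogeneous.sum _ _ _
      fun i hi => ?_
    convert isWeightedHomogeneous_C_mul_X_pow_mul_X_pow hx hy _ _ _ using 2
    have := hkm j hj
    have := mem_range.mp hi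
    omega
  -- Subtracting `F(z) • X y ^ (N + 1) = 0` from `z y ^ (N + 1) • F` leaves, monomial by monomial,
  -- differences of `k`-th powers of `z y • X x` and `z x • X y`.
  have hkey : C (z y ^ (N + 1)) * ∑ j ∈ s, C (c j) * X x ^ k j * X y ^ m j =
      (C (z y) * X x - C (z x) * X y) * Q := by
    have hzero : ∑ j ∈ s, C (c j * z x ^ k j * z y ^ m j) * X y ^ (k j + m j) = 0 := by
      rw [sum_congr rfl fun j hj => by rw [hkm j hj], ← sum_mul, ← map_sum]
      simp_all
    rw [mul_sum, mul_sum, ← sub_zero (∑ j ∈ s, _), ← hzero, ← sum_sub_distrib]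
    refine sum_congr rfl fun j hj => ?_
    rw [← C_mul_X_pow_mul_X_pow_sub_eq_mul, hkm j hj]
    simp only [map_mul]
    ring
  refine ⟨C (z y ^ (N + 1))⁻¹ * Q, hQ.C_mul _, ?_⟩
  rw [mul_left_comm, ← hkey, ← mul_assoc, ← C_mul, inv_mul_cancel₀ (pow_ne_zero _ hzy), C_1,
    one_mul]

end BinaryForms

theorem syzygy_eq_zero_of_eval_eq_zero {K : Type*} [Field K] {N : ℕ}
    {p g : Fin 4 → MvPolynomial (Fin 4) K}
    (hmin : ∀ q : Fin 4 → MvPolynomial (Fin 4) K,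
      (∀ i, (q i).IsWeightedHomogeneous bw (0, N)) → ∑ i, q i * p i = 0 → q = 0)
    (hg : ∑ i, g i * p i = 0) (A : Fin 4 → Fin (N + 2) → K)
    (hgA : ∀ i, g i = ∑ j : Fin (N + 2), C (A i j) * X 2 ^ (N + 1 - (j : ℕ)) * X 3 ^ (j : ℕ))
    (z : Fin 4 → K) (hz : ∀ i, eval z (g i) = 0) (hz23 : z 2 ≠ 0 ∨ z 3 ≠ 0) : g = 0 := by
  obtain ⟨L, hL, q, hq, hgq⟩ : ∃ L ≠ 0, ∃ q : Fin 4 → MvPolynomial (Fin 4) K,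
      (∀ i, (q i).IsWeightedHomogeneous bw (N • bw 2)) ∧ ∀ i, g i = L * q i := by
    -- read the `g i` as forms in `(X 3, X 2)` or `(X 2, X 3)`, so that `z` of the second
    -- variable is nonzero
    rcases hz23 with h2 | h3
    · have hg' : ∀ i, g i = ∑ j : Fin (N + 2), C (A i j) * X 3 ^ (j : ℕ) * X 2 ^ (N + 1 - j) :=
        fun i => (hgA i).trans (sum_congr rfl fun j _ => mul_right_comm _ _ _)
      choose q hq hgq using fun i => exists_eq_mul_of_eval_eq_zero (x := 3) (y := 2) (N := N)
        univ (A i) (fun j => j) (fun j => N + 1 - j) (fun j _ => by have := j.isLt; omega)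
        (d := bw 2) rfl rfl h2 (by rw [← hg' i]; exact hz i)
      exact ⟨_, C_mul_X_sub_C_mul_X_ne_zero (by decide) _ h2, q, hq,
        fun i => (hg' i).trans (hgq i)⟩
    · choose q hq hgq using fun i => exists_eq_mul_of_eval_eq_zero (x := 2) (y := 3) (N := N)
        univ (A i) (fun j => N + 1 - j) (fun j => j) (fun j _ => by have := j.isLt; omega)
        (d := bw 2) rfl rfl h3 (by rw [← hgA i]; exact hz i)
      exact ⟨_, C_mul_X_sub_C_mul_X_ne_zero (by decide) _ h3, q, hq,
        fun i => (hgA i).trans (hgq i)⟩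
  have hq0 : q = 0 := by
    refine hmin q (fun i => by simpa [bw] using hq i) ?_
    refine (mul_eq_zero.mp ?_).resolve_left hL
    simpa [mul_sum, ← mul_assoc, ← hgq] using hg
  funext i
  simp [hgq, hq0]

theorem regular_sequence_of_dim_V_eq_two_general
    (K : Type*) [Field K] [IsAlgClosed K]
    (n : ℕ)
    (p : Fin 4 → MvPolynomial (Fin 4) K)
    (hpli : LinearIndependent K p)
    (g : Fin 4 → MvPolynomial (Fin 4) K)
    (hgne : g ≠ 0)
    (hgsyz : ∑ i, g i * p i = 0)
    (hmin : ∀ m < n, ∀ h : Fin 4 → MvPolynomial (Fin 4) K,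
      (∀ i, (h i).IsWeightedHomogeneous bw (0, m)) → ∑ i, h i * p i = 0 → h = 0)
    (A : Fin 4 → Fin (n + 1) → K)
    (hgA : ∀ i, g i = ∑ j : Fin (n + 1), C (A i j) * X 2 ^ (n - (j : ℕ)) * X 3 ^ (j : ℕ))
    (f : Fin (n + 1) → MvPolynomial (Fin 4) K)
    (hf : ∀ j, f j = ∑ i, C (A i j) * p i)
    (f' : Fin 2 → MvPolynomial (Fin 4) K)
    (hf'mem : ∀ i, f' i ∈ Set.range f)
    (B : Fin 2 → Fin (n + 1) → K)
    (hB : ∀ j, f j = ∑ i, C (B i j) * f' i)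
    (h : Fin 2 → MvPolynomial (Fin 4) K)
    (hh : ∀ i, h i = ∑ j : Fin (n + 1), C (B i j) * X 2 ^ (n - (j : ℕ)) * X 3 ^ (j : ℕ)) :
    RingTheory.Sequence.IsRegular (MvPolynomial (Fin 4) K) [h 0, h 1] := by
  obtain ⟨N, rfl⟩ := Nat.exists_eq_add_one_of_ne_zero
    (ne_zero_of_linearIndependent_of_syzygy hpli hgsyz hgne A 2 3 hgA)
  choose σ hσ using hf'mem
  have hA := eq_sum_mul_of_linearIndependent hpli (f := f) (by simpa [smul_eq_C_mul] using hf)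
    (B := B) (σ := σ) (by simpa [smul_eq_C_mul, hσ] using hB)
  have hgh : ∀ i, g i = C (A i (σ 0)) * h 0 + C (A i (σ 1)) * h 1 := fun i => by
    simp only [hgA, hh, mul_assoc]
    rw [sum_C_mul_eq_sum_C_mul_sum (hA i), Fin.sum_univ_two]
  have hzero : ∀ z : Fin 4 → K, (∀ q ∈ Ideal.span {h 0, h 1}, eval z q = 0) →
      z 2 = 0 ∧ z 3 = 0 := by
    intro z hz
    by_contra hz23
    have hz0 := hz (h 0) (Ideal.subset_span (by simp))
    have hz1 := hz (h 1) (Ideal.subset_span (by simp))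
    exact hgne (syzygy_eq_zero_of_eval_eq_zero (hmin N N.lt_succ_self) hgsyz A hgA z
      (by simp [hgh, hz0, hz1]) (not_and_or.mp hz23))
  have hev : ∀ k, eval 0 (h k) = 0 := fun k => by
    rw [hh]
    exact eval_zero_sum_C_mul_X_pow_mul_X_pow N.succ_ne_zero _ _ _
  refine isRegular_pair_of_isRelPrime ?_ ?_
  · exact isRelPrime_of_mem_radical (isRelPrime_X_X (by decide))
      (X_mem_radical_of_eval_eq_zero fun z hz => (hzero z hz).1)
      (X_mem_radical_of_eval_eq_zero fun z hz => (hzero z hz).2)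
  · exact ne_top_of_le_ne_top (RingHom.ker_ne_top (eval 0)) (Ideal.span_le.mpr
      (Set.insert_subset_iff.mpr ⟨hev 0, Set.singleton_subset_iff.mpr (hev 1)⟩))

/-- If `dim_K V = 2`, `f₀', f₁'` is a basis of `V` chosen among the `f_j`, and
`(h₀,h₁)ᵀ = B ⬝ (uⁿ, u^{n-1}v, …, vⁿ)ᵀ` where `B` is the transition matrix with
`f_j = B₀ⱼ f₀' + B₁ⱼ f₁'`, then `h₀, h₁` is an `R`-regular sequence. -/
theorem regular_sequence_of_dim_V_eq_two
    (K : Type*) [Field K] [IsAlgClosed K]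
    (a b n : ℕ) (ha : 1 ≤ a) (hb : 1 ≤ b)
    (p : Fin 4 → MvPolynomial (Fin 4) K)
    (hp : ∀ i, (p i).IsWeightedHomogeneous bw (a, b))
    (hpli : LinearIndependent K p)
    (hbpf : ¬ ∃ x : Fin 4 → K, ¬(x 0 = 0 ∧ x 1 = 0) ∧ ¬(x 2 = 0 ∧ x 3 = 0) ∧
      ∀ i, eval x (p i) = 0)
    (g : Fin 4 → MvPolynomial (Fin 4) K)
    (hg : ∀ i, (g i).IsWeightedHomogeneous bw (0, n))
    (hgne : g ≠ 0)
    (hgsyz : ∑ i, g i * p i = 0)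
    (hmin : ∀ m < n, ∀ h : Fin 4 → MvPolynomial (Fin 4) K,
      (∀ i, (h i).IsWeightedHomogeneous bw (0, m)) → ∑ i, h i * p i = 0 → h = 0)
    (A : Fin 4 → Fin (n + 1) → K)
    (hgA : ∀ i, g i = ∑ j : Fin (n + 1), C (A i j) * X 2 ^ (n - (j : ℕ)) * X 3 ^ (j : ℕ))
    (f : Fin (n + 1) → MvPolynomial (Fin 4) K)
    (hf : ∀ j, f j = ∑ i, C (A i j) * p i)
    (hdim : Module.finrank K ↥(Submodule.span K (Set.range f)) = 2)
    (f' : Fin 2 → MvPolynomial (Fin 4) K)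
    (hf'mem : ∀ i, f' i ∈ Set.range f)
    (hf'li : LinearIndependent K f')
    (hf'span : Submodule.span K (Set.range f') = Submodule.span K (Set.range f))
    (B : Fin 2 → Fin (n + 1) → K)
    (hB : ∀ j, f j = ∑ i, C (B i j) * f' i)
    (h : Fin 2 → MvPolynomial (Fin 4) K)
    (hh : ∀ i, h i = ∑ j : Fin (n + 1), C (B i j) * X 2 ^ (n - (j : ℕ)) * X 3 ^ (j : ℕ)) :
    RingTheory.Sequence.IsRegular (MvPolynomial (Fin 4) K) [h 0, h 1] :=
  regular_sequence_of_dim_V_eq_two_general K n p hpli g hgne hgsyz hmin A hgA f hf f' hf'mem B hB h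
    hh
end

section
/- Let f and g be nonzero homogeneous polynomials in K[x,y] with deg f = m and deg g = n, and suppose every common divisor of f and g in K[x,y] is a unit. Then (x,y)^{m+n-1} ⊆ (f,g), i.e. every monomial x^i y^j with i + j = m + n - 1 lies in the ideal generated by f and g. -/
/-!
Write `H k` for the space of binary forms of degree `k`; it has dimension `k + 1`. For `m, n > 0`
the Sylvester map `(a, b) ↦ a f + b g` sends `H (n - 1) × H (m - 1)` to `H (m + n - 1)`, and both
sides have dimension `m + n`. It is injective: `a f + b g = 0` gives `g ∣ a f`, hence `g ∣ a` by
coprimality, and `deg a < deg g` forces `a = 0`, then `b = 0`. So it is onto: every form of degree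
`m + n - 1` lies in `(f, g)`, and these forms span `(x, y)^(m + n - 1)`. If `m = 0` or `n = 0`,
one of `f, g` is a nonzero constant and `(f, g)` is the unit ideal.
-/

open MvPolynomial

namespace MvPolynomial

variable {σ R K : Type*}

theorem IsHomogeneous.eq_zero_of_dvd_of_lt [CommRing R] [IsDomain R] {g a : MvPolynomial σ R}
    {n k : ℕ} (hg : g.IsHomogeneous n) (ha : a.IsHomogeneous k) (hk : k < n) (h : g ∣ a) :
    a = 0 := by
  by_contra ha0
  obtain ⟨c, rfl⟩ := h
  obtain ⟨hg0, hc0⟩ := mul_ne_zero_iff.mp ha0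
  have hdeg := totalDegree_mul_of_isDomain hg0 hc0
  rw [ha.totalDegree ha0, hg.totalDegree hg0] at hdeg
  omega

theorem IsHomogeneous.isUnit_of_degree_zero [Field K] {f : MvPolynomial σ K}
    (hf : f.IsHomogeneous 0) (hf0 : f ≠ 0) : IsUnit f := by
  have hC := totalDegree_eq_zero_iff_eq_C.mp (hf.totalDegree hf0)
  rw [hC] at hf0 ⊢
  exact (isUnit_iff_ne_zero.mpr fun h => hf0 (by rw [h, map_zero])).map C

theorem span_pow_le_span_isHomogeneous [CommSemiring R] {s : Set (MvPolynomial σ R)}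
    (hs : ∀ p ∈ s, p.IsHomogeneous 1) (k : ℕ) :
    Ideal.span s ^ k ≤ Ideal.span {p | p.IsHomogeneous k} := by
  induction k with
  | zero =>
    rw [pow_zero, Ideal.one_eq_top, ← Ideal.span_singleton_one]
    exact Ideal.span_mono (by simpa using isHomogeneous_one σ R)
  | succ k ih =>
    rw [pow_succ]
    refine (Ideal.mul_mono_left ih).trans ?_
    rw [Ideal.span_mul_span']
    refine Ideal.span_mono ?_
    rintro _ ⟨p, hp, q, hq, rfl⟩
    exact (hp : p.IsHomogeneous k).mul (hs q hq)

section Sylvester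

variable {p q i j k : ℕ}

noncomputable def sylvesterMap [CommSemiring R] {f g : MvPolynomial σ R}
    (hf : f.IsHomogeneous p) (hg : g.IsHomogeneous q) (hi : i + p = k) (hj : j + q = k) :
    homogeneousSubmodule σ R i × homogeneousSubmodule σ R j →ₗ[R]
      homogeneousSubmodule σ R k :=
  ((LinearMap.mulRight R f).restrict fun _ ha => hi ▸ IsHomogeneous.mul ha hf).coprod
    ((LinearMap.mulRight R g).restrict fun _ hb => hj ▸ IsHomogeneous.mul hb hg)

theorem sylvesterMap_injective [CommRing R] [IsDomain R] [UniqueFactorizationMonoid R]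
    {f g : MvPolynomial σ R} (hf : f.IsHomogeneous p) (hg : g.IsHomogeneous q)
    (hi : i + p = k) (hj : j + q = k) (hcop : IsRelPrime f g) (hg0 : g ≠ 0) (hiq : i < q) :
    Function.Injective (sylvesterMap hf hg hi hj) := by
  rw [← LinearMap.ker_eq_bot, LinearMap.ker_eq_bot']
  rintro ⟨⟨a, ha⟩, ⟨b, hb⟩⟩ hab
  have hsum : a * f + b * g = 0 := congrArg Subtype.val hab
  have hga : g ∣ a := hcop.symm.dvd_of_dvd_mul_left ⟨-b, by linear_combination hsum⟩
  have ha0 : a = 0 := hg.eq_zero_of_dvd_of_lt ha hiq hga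
  have hb0 : b = 0 := by simpa [ha0, hg0] using hsum
  subst ha0 hb0
  rfl

end Sylvester

theorem card_degree_eq_fin_two (k : ℕ) :
    Nat.card {d : Fin 2 →₀ ℕ // d.degree = k} = k + 1 := by
  rw [← Finset.Nat.card_antidiagonal k, ← Nat.card_eq_finsetCard]
  exact Nat.card_congr <| (Finsupp.equivFunOnFinite.trans (finTwoArrowEquiv ℕ)).subtypeEquiv
    fun d => by simp [Finsupp.degree_eq_sum]

theorem finrank_homogeneousSubmodule_fin_two [Field K] (k : ℕ) :
    Module.finrank K (homogeneousSubmodule (Fin 2) K k) = k + 1 := by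
  rw [homogeneousSubmodule_eq_finsupp_supported, ← card_degree_eq_fin_two k]
  exact Module.finrank_eq_nat_card_basis (basisRestrictSupport K _)

instance [Field K] (k : ℕ) : FiniteDimensional K (homogeneousSubmodule (Fin 2) K k) :=
  Module.finite_of_finrank_pos (by rw [finrank_homogeneousSubmodule_fin_two]; omega)

theorem IsHomogeneous.mem_span_pair [Field K] {f g r : MvPolynomial (Fin 2) K} {m n : ℕ}
    (hf : f.IsHomogeneous m) (hg : g.IsHomogeneous n) (hm : 0 < m) (hn : 0 < n)
    (hcop : IsRelPrime f g) (hg0 : g ≠ 0) (hr : r.IsHomogeneous (m + n - 1)) :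
    r ∈ Ideal.span {f, g} := by
  have hrank : Module.finrank K
      (homogeneousSubmodule (Fin 2) K (n - 1) × homogeneousSubmodule (Fin 2) K (m - 1)) =
      Module.finrank K (homogeneousSubmodule (Fin 2) K (m + n - 1)) := by
    simp only [Module.finrank_prod, finrank_homogeneousSubmodule_fin_two]
    omega
  have hsurj := (LinearMap.injective_iff_surjective_of_finrank_eq_finrank hrank).mp
    (sylvesterMap_injective hf hg (by omega) (by omega) hcop hg0 (by omega))
  obtain ⟨⟨a, b⟩, hab⟩ := hsurj ⟨r, hr⟩
  exact Ideal.mem_span_pair.mpr ⟨a, b, congrArg Subtype.val hab⟩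

end MvPolynomial

/-- **Sylvester containment lemma.** If `f, g ∈ K[x,y]` are nonzero homogeneous
polynomials of degrees `m` and `n` with no non-unit common divisor, then
`(x,y)^{m+n-1} ⊆ (f,g)`. Here `X 0 = x` and `X 1 = y`. -/
theorem sylvester_containment
    (K : Type*) [Field K] (m n : ℕ)
    (f g : MvPolynomial (Fin 2) K)
    (hf0 : f ≠ 0) (hg0 : g ≠ 0)
    (hf : f.IsHomogeneous m) (hg : g.IsHomogeneous n)
    (hcop : ∀ d : MvPolynomial (Fin 2) K, d ∣ f → d ∣ g → IsUnit d) :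
    (Ideal.span {(X 0 : MvPolynomial (Fin 2) K), X 1}) ^ (m + n - 1) ≤ Ideal.span {f, g} := by
  rcases Nat.eq_zero_or_pos m with rfl | hm
  · have hunit := hf.isUnit_of_degree_zero hf0
    exact le_top.trans_eq (Ideal.eq_top_of_isUnit_mem _ (Ideal.subset_span (by simp)) hunit).symm
  rcases Nat.eq_zero_or_pos n with rfl | hn
  · have hunit := hg.isUnit_of_degree_zero hg0
    exact le_top.trans_eq (Ideal.eq_top_of_isUnit_mem _ (Ideal.subset_span (by simp)) hunit).symm
  have hX : ∀ p ∈ ({X 0, X 1} : Set (MvPolynomial (Fin 2) K)), p.IsHomogeneous 1 := by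
    simp [isHomogeneous_X]
  exact (span_pow_le_span_isHomogeneous hX _).trans <|
    Ideal.span_le.mpr fun r hr => hf.mem_span_pair hg hm hn (fun d => hcop d) hg0 hr
end

section
/- Let n, mu be integers with 1 <= mu <= n - mu. Let psi = [C1 | C2] be a 3 x 2 matrix over A = K[u,v] whose first-column entries are homogeneous of degree mu and second-column entries homogeneous of degree n - mu, and suppose the signed maximal minors g_i = (-1)^i det(psi with row i deleted), i = 0,1,2, generate a height-2 ideal of A. Let nu1 be an integer with 0 <= nu1 <= mu, and let phi1 be a 3 x 2 matrix over A with first-column entries homogeneous of degree nu1 and second-column entries homogeneous of degree mu - nu1, such that C1^T · phi1 = 0, the entries of C1 are the signed maximal minors of phi1, and the entries of C1 generate a height-2 ideal of A. Then the two entries of the row vector C2^T · phi1 are coprime: every common divisor of them in A is a unit. -/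
open MvPolynomial

/-- The height (codimension) of an ideal: the infimum of the heights of the primes
containing it. -/
noncomputable def idealHeight {A : Type*} [CommRing A] (I : Ideal A) : ℕ∞ :=
  ⨅ (P : PrimeSpectrum A) (_ : I ≤ P.asIdeal), Order.height P


lemma aux_ideal_ht_le {A : Type*} [CommRing A] {I : Ideal A} (P : PrimeSpectrum A)
    (hle : I ≤ P.asIdeal) : idealHeight I ≤ Order.height P :=
  le_trans (iInf_le _ P) (iInf_le _ hle)

/-- Any prime strictly below a principal prime is `⊥` in a `WfDvdMonoid` domain. -/
lemma aux_prime_below_principal {A : Type*} [CommRing A] [IsDomain A] [WfDvdMonoid A]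
    {p : A} (hp : Prime p) (Q : Ideal A) [Q.IsPrime] (hQ : Q < Ideal.span {p}) :
    Q = ⊥ := by
  by_contra hne
  obtain ⟨x, hxQ, hx0⟩ := Submodule.exists_mem_ne_zero_of_ne_bot hne
  obtain ⟨m, ⟨hmQ, hm0⟩, hmin⟩ := (wellFounded_dvdNotUnit (α := A)).has_min
    {x | x ∈ Q ∧ x ≠ 0} ⟨x, hxQ, hx0⟩
  have hpQ : p ∉ Q := fun hpmem =>
    lt_irrefl _ (lt_of_lt_of_le hQ ((Ideal.span_singleton_le_iff_mem Q).mpr hpmem))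
  obtain ⟨c, hc⟩ := Ideal.mem_span_singleton.mp (hQ.le hmQ)
  have hcQ : c ∈ Q := by
    rcases (‹Q.IsPrime›.mem_or_mem (hc ▸ hmQ)) with h | h
    · exact absurd h hpQ
    · exact h
  have hc0 : c ≠ 0 := by rintro rfl; simp at hc; exact hm0 (by simp [hc])
  exact hmin c ⟨hcQ, hc0⟩ ⟨hc0, p, hp.not_unit, by rw [hc]; ring⟩

/-- A point of the prime spectrum whose ideal is `⊥` is minimal, hence has height 0. -/
lemma aux_height_bot {A : Type*} [CommRing A] (Q : PrimeSpectrum A) (h : Q.asIdeal = ⊥) :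
    Order.height Q = 0 := by
  rw [Order.height_eq_zero]
  intro R hR
  rw [← PrimeSpectrum.asIdeal_le_asIdeal] at hR ⊢
  rw [h] at hR ⊢
  exact le_of_eq (le_bot_iff.mp hR).symm

/-- A principal prime has height at most 1 in a `WfDvdMonoid` domain. -/
lemma aux_principal_height_le_one {A : Type*} [CommRing A] [IsDomain A] [WfDvdMonoid A]
    {p : A} (hp : Prime p) (P : PrimeSpectrum A) (hP : P.asIdeal = Ideal.span {p}) :
    Order.height P ≤ 1 := by
  have : Order.height P ≤ (1 : ℕ) := by
    rw [Order.height_le_coe_iff]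
    intro Q hQ
    have hlt : Q.asIdeal < Ideal.span {p} := by
      rw [← hP]; exact (PrimeSpectrum.asIdeal_lt_asIdeal Q P).mpr hQ
    have := aux_prime_below_principal hp Q.asIdeal hlt
    rw [aux_height_bot Q this]
    norm_num
  simpa using this

/-- Let `ψ = [C₁ | C₂]` be a `3 × 2` matrix over `A = K[u,v]` with column degrees `μ` and
`n - μ` whose signed maximal minors generate a height-2 ideal, and let `φ₁` be a
Hilbert–Burch matrix for the entries of `C₁` (so `C₁ᵀ φ₁ = 0`, the entries of `C₁` are the
signed maximal minors of `φ₁`, and the entries of `C₁` generate a height-2 ideal).  Then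
the two entries of the row vector `C₂ᵀ φ₁` are coprime. Here `X 0 = u`, `X 1 = v`. -/
theorem entries_of_C2T_phi1_coprime
    (K : Type*) [Field K]
    (n mu nu1 : ℕ) (hmu1 : 1 ≤ mu) (hmu2 : mu ≤ n - mu) (hnu1 : nu1 ≤ mu)
    (psi : Matrix (Fin 3) (Fin 2) (MvPolynomial (Fin 2) K))
    (hpsi0 : ∀ i, (psi i 0).IsHomogeneous mu)
    (hpsi1 : ∀ i, (psi i 1).IsHomogeneous (n - mu))
    (hminors_ht : idealHeight (Ideal.span (Set.range
        (fun i : Fin 3 => (-1 : MvPolynomial (Fin 2) K) ^ (i : ℕ) *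
          (psi.submatrix i.succAbove id).det))) = 2)
    (phi1 : Matrix (Fin 3) (Fin 2) (MvPolynomial (Fin 2) K))
    (hphi0 : ∀ i, (phi1 i 0).IsHomogeneous nu1)
    (hphi1 : ∀ i, (phi1 i 1).IsHomogeneous (mu - nu1))
    (hortho : ∀ j : Fin 2, ∑ i, psi i 0 * phi1 i j = 0)
    (hC1minors : ∀ i : Fin 3, psi i 0 = (-1) ^ (i : ℕ) * (phi1.submatrix i.succAbove id).det)
    (hC1ht : idealHeight (Ideal.span (Set.range (fun i => psi i 0))) = 2) :
    ∀ d : MvPolynomial (Fin 2) K,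
      d ∣ (∑ i, psi i 1 * phi1 i 0) → d ∣ (∑ i, psi i 1 * phi1 i 1) → IsUnit d := by
  intro d ha hb
  by_contra hd
  -- the key cross-product identity: the signed minors of ψ lie in (a, b)
  have key : ∀ i : Fin 3, (-1 : MvPolynomial (Fin 2) K) ^ (i:ℕ) * (psi.submatrix i.succAbove id).det
      = (∑ j, psi j 1 * phi1 j 0) * phi1 i 1 - (∑ j, psi j 1 * phi1 j 1) * phi1 i 0 := by
    have h0 := hC1minors 0
    have h1 := hC1minors 1
    have h2 := hC1minors 2
    simp only [Matrix.det_fin_two, Matrix.submatrix_apply, id_eq, Fin.succAbove,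
      Fin.lt_def] at h0 h1 h2
    norm_num at h0 h1 h2
    intro i
    fin_cases i <;>
    · simp only [Matrix.det_fin_two, Matrix.submatrix_apply, id_eq, Fin.sum_univ_three,
        Fin.succAbove, Fin.lt_def]
      simp only [show ((⟨0, by omega⟩ : Fin 3) = 0) from rfl,
        show ((⟨1, by omega⟩ : Fin 3) = 1) from rfl,
        show ((⟨2, by omega⟩ : Fin 3) = 2) from rfl]
      norm_num [h0, h1, h2]
      ring
  -- find a suitable prime P of height ≤ 1 containing the minor ideal
  obtain ⟨P, hPle, hPht⟩ : ∃ P : PrimeSpectrum (MvPolynomial (Fin 2) K),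
      Ideal.span (Set.range (fun i : Fin 3 => (-1 : MvPolynomial (Fin 2) K) ^ (i : ℕ) *
        (psi.submatrix i.succAbove id).det)) ≤ P.asIdeal ∧ Order.height P ≤ 1 := by
    rcases eq_or_ne d 0 with rfl | hd0
    · -- d = 0 : both sums vanish, the minors vanish, take the zero ideal
      have ha0 : (∑ j, psi j 1 * phi1 j 0) = 0 := zero_dvd_iff.mp ha
      have hb0 : (∑ j, psi j 1 * phi1 j 1) = 0 := zero_dvd_iff.mp hb
      refine ⟨⟨⊥, Ideal.bot_prime⟩, ?_, ?_⟩
      · rw [Ideal.span_le]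
        rintro x ⟨i, rfl⟩
        simp [key i, ha0, hb0]
      · rw [aux_height_bot (⟨⊥, Ideal.bot_prime⟩ : PrimeSpectrum (MvPolynomial (Fin 2) K)) rfl]
        exact zero_le_one
    · -- d ≠ 0 : take a prime factor p of d
      obtain ⟨p, hirr, hpd⟩ := WfDvdMonoid.exists_irreducible_factor hd hd0
      have hp : Prime p := (UniqueFactorizationMonoid.irreducible_iff_prime).mp hirr
      have hPprime : (Ideal.span {p}).IsPrime := (Ideal.span_singleton_prime hp.ne_zero).mpr hp
      refine ⟨⟨Ideal.span {p}, hPprime⟩, ?_, aux_principal_height_le_one hp _ rfl⟩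
      rw [Ideal.span_le]
      rintro x ⟨i, rfl⟩
      simp only [SetLike.mem_coe, Ideal.mem_span_singleton]
      rw [key i]
      exact dvd_sub ((hpd.trans ha).mul_right _) ((hpd.trans hb).mul_right _)
  have := le_trans (aux_ideal_ht_le P hPle) hPht
  rw [hminors_ht] at this
  norm_num at this
end

section
/- Let psi be a 3 x 2 matrix over A = K[u,v], set g_i = (-1)^i det(psi with row i deleted) for i = 0,1,2, and suppose the ideal (g0,g1,g2) of A has height 2. Then every w in A^3 with psi^T w = 0 (i.e. w is orthogonal to both columns of psi) is of the form w = lambda · (g0,g1,g2) for some lambda in A. -/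
/-!
The signed minors `gᵢ` are the entries of the cross product `g = c₀ × c₁` of the two columns
of `ψ`. If `w ⊥ c₀, c₁`, then `w × (c₀ × c₁) = (w·c₁) c₀ - (w·c₀) c₁ = 0`, i.e. `w` is
proportional to `g`: `wᵢ gⱼ = wⱼ gᵢ`. By Krull's principal ideal theorem an ideal of height `2`
lies in no principal ideal `(d)` with `d` a non-unit, so the `gᵢ` have no common non-unit factor
(in particular `g ≠ 0`). In the factorial ring `K[u,v]` this forces `w` to be a multiple of `g`.
-/

open MvPolynomial Matrix

section Height

variable {R : Type*} [CommRing R]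

lemma idealHeight_le_height {I P : Ideal R} [P.IsPrime] (h : I ≤ P) :
    idealHeight I ≤ P.height := by
  rw [PrimeSpectrum.height_eq_orderHeight ⟨P, ‹_›⟩]
  exact iInf₂_le (⟨P, ‹_›⟩ : PrimeSpectrum R) h

lemma idealHeight_le_one_of_le_span_singleton [IsNoetherianRing R] {I : Ideal R} {d : R}
    (hd : ¬IsUnit d) (hI : I ≤ Ideal.span {d}) : idealHeight I ≤ 1 := by
  obtain ⟨p, hp⟩ := (Ideal.span {d}).nonempty_minimalPrimes (by simpa)
  have := hp.isPrime
  calc idealHeight I ≤ p.height := idealHeight_le_height (hI.trans hp.1.2)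
    _ ≤ 1 := Ideal.height_le_one_of_isPrincipal_of_mem_minimalPrimes _ _ hp

lemma isUnit_of_forall_dvd_of_two_le_idealHeight [IsNoetherianRing R] {ι : Type*} {g : ι → R}
    (hg : 2 ≤ idealHeight (Ideal.span (Set.range g))) {d : R} (hd : ∀ i, d ∣ g i) :
    IsUnit d := by
  by_contra hu
  have hle : Ideal.span (Set.range g) ≤ Ideal.span {d} := by
    rw [Ideal.span_le]
    rintro _ ⟨i, rfl⟩
    exact Ideal.mem_span_singleton.mpr (hd i)
  exact absurd (hg.trans (idealHeight_le_one_of_le_span_singleton hu hle)) (by decide)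

end Height

section Proportional

variable {R : Type*} [CommRing R] [IsDomain R] [NormalizedGCDMonoid R]

/-- A nonzero entry `g i₀` divides `w i₀ * gcd g`, and `gcd g` is a unit. -/
theorem exists_eq_smul_of_mul_eq_mul {ι : Type*} [Fintype ι] {g w : ι → R}
    (hg : ∀ d, (∀ i, d ∣ g i) → IsUnit d) (hw : ∀ i j, w i * g j = w j * g i) :
    ∃ c : R, w = c • g := by
  obtain ⟨i₀, hi₀⟩ : ∃ i, g i ≠ 0 := by
    by_contra! h
    exact not_isUnit_zero (hg 0 fun i => by simp [h i])
  have hgcd : IsUnit (Finset.univ.gcd g) := hg _ fun i => Finset.gcd_dvd (Finset.mem_univ i)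
  have hdvd : g i₀ ∣ w i₀ * Finset.univ.gcd g :=
    (Finset.dvd_gcd fun j _ => ⟨w j, by rw [hw]; ring⟩).trans
      (Finset.gcd_mul_left' Finset.univ g (w i₀)).dvd
  obtain ⟨c, hc⟩ := hgcd.dvd_mul_right.mp hdvd
  refine ⟨c, funext fun j => mul_left_cancel₀ hi₀ ?_⟩
  rw [Pi.smul_apply, smul_eq_mul]
  linear_combination g j * hc - hw i₀ j

end Proportional

section CrossProduct

variable {R : Type*} [CommRing R]

lemma mul_eq_mul_of_cross_eq_zero {u v : Fin 3 → R} (h : u ⨯₃ v = 0) (i j : Fin 3) :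
    u i * v j = u j * v i := by
  rw [cross_apply] at h
  have h0 := congrFun h 0
  have h1 := congrFun h 1
  have h2 := congrFun h 2
  simp only [Fin.isValue, cons_val, Pi.zero_apply, sub_eq_zero] at h0 h1 h2
  fin_cases i <;> fin_cases j <;> grind

lemma cross_cross_eq_zero_of_dotProduct_eq_zero {w a b : Fin 3 → R} (ha : a ⬝ᵥ w = 0)
    (hb : b ⬝ᵥ w = 0) : w ⨯₃ (a ⨯₃ b) = 0 := by
  rw [cross_cross_eq_smul_sub_smul', dotProduct_comm, hb, ha, zero_smul, zero_smul, sub_zero]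

lemma signed_minor_eq_cross (psi : Matrix (Fin 3) (Fin 2) R) (i : Fin 3) :
    (-1) ^ (i : ℕ) * (psi.submatrix i.succAbove id).det = (psiᵀ 0 ⨯₃ psiᵀ 1) i := by
  fin_cases i <;> simp [det_fin_two, cross_apply, Fin.succAbove] <;> ring

end CrossProduct

/-- Let `ψ` be a `3 × 2` matrix over `A = K[u,v]` whose signed maximal minors
`gᵢ = (-1)ⁱ det(ψ with row i deleted)` generate a height-2 ideal.  Then every `w ∈ A³`
with `ψᵀ w = 0` is a multiple of `(g₀,g₁,g₂)`. -/
theorem kernel_of_transpose_spanned_by_minors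
    (K : Type*) [Field K]
    (psi : Matrix (Fin 3) (Fin 2) (MvPolynomial (Fin 2) K))
    (g : Fin 3 → MvPolynomial (Fin 2) K)
    (hg : ∀ i : Fin 3, g i = (-1) ^ (i : ℕ) * (psi.submatrix i.succAbove id).det)
    (hht : idealHeight (Ideal.span (Set.range g)) = 2) :
    ∀ w : Fin 3 → MvPolynomial (Fin 2) K, psiᵀ.mulVec w = 0 →
      ∃ lam : MvPolynomial (Fin 2) K, w = lam • g := by
  intro w hw
  have hg_cross : g = psiᵀ 0 ⨯₃ psiᵀ 1 := by
    funext i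
    exact (hg i).trans (signed_minor_eq_cross psi i)
  have hw_cross : w ⨯₃ g = 0 := by
    rw [hg_cross]
    exact cross_cross_eq_zero_of_dotProduct_eq_zero (congrFun hw 0) (congrFun hw 1)
  let _ := UniqueFactorizationMonoid.strongNormalizationMonoid (α := MvPolynomial (Fin 2) K)
  let _ := UniqueFactorizationMonoid.toNormalizedGCDMonoid (MvPolynomial (Fin 2) K)
  exact exists_eq_smul_of_mul_eq_mul
    (fun _ => isUnit_of_forall_dvd_of_two_le_idealHeight hht.ge)
    (mul_eq_mul_of_cross_eq_zero hw_cross)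
end
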